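/- arXiv:2507.02102 — 3 statements merged into one kernel-verified Lean document; each statement's English description precedes it below -/
import Mathlib

section
/- For all real numbers a, b with 0 < a < 1 < b, the closed relation F_{ab} = {(x, ax) : x ∈ [0,1]} ∪ {(x, bx) : x ∈ [0, 1/b]} on [0,1] is both CR-turbulent and reverse CR-turbulent. -/
open Set

/-- The n-th Mahavier product of a relation `F` on `X`: tuples `(x 0, …, x n)`
with `(x i, x (i+1)) ∈ F` for all `i < n`. -/
def Mahavier {X : Type*} (F : Set (X × X)) (n : ℕ) : Set (Fin (n + 1) → X) :=
  {x | ∀ i : Fin n, (x i.castSucc, x i.succ) ∈ F}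

/-- A witness of CR-turbulence at length parameter `n`. -/
def CRWitness {X : Type*} [TopologicalSpace X] (F : Set (X × X)) (n : ℕ) : Prop :=
  ∃ K L : Set (Fin (n + 1) → X),
    K.Nonempty ∧ L.Nonempty ∧ IsClosed K ∧ IsClosed L ∧
    K ⊆ Mahavier F n ∧ L ⊆ Mahavier F n ∧ Disjoint K L ∧
    ((fun x => x 0) '' K ∪ (fun x => x 0) '' L) ⊆
      ((fun x => x (Fin.last n)) '' K ∩ (fun x => x (Fin.last n)) '' L)

/-- A witness of reverse CR-turbulence at length parameter `n`. -/
def RevCRWitness {X : Type*} [TopologicalSpace X] (F : Set (X × X)) (n : ℕ) : Prop :=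
  ∃ K L : Set (Fin (n + 1) → X),
    K.Nonempty ∧ L.Nonempty ∧ IsClosed K ∧ IsClosed L ∧
    K ⊆ Mahavier F n ∧ L ⊆ Mahavier F n ∧ Disjoint K L ∧
    ((fun x => x (Fin.last n)) '' K ∪ (fun x => x (Fin.last n)) '' L) ⊆
      ((fun x => x 0) '' K ∩ (fun x => x 0) '' L)

/-- `F` is CR-turbulent. -/
def CRTurbulent {X : Type*} [TopologicalSpace X] (F : Set (X × X)) : Prop :=
  ∃ n : ℕ, 1 ≤ n ∧ CRWitness F n

/-- `F` is reverse CR-turbulent. -/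
def RevCRTurbulent {X : Type*} [TopologicalSpace X] (F : Set (X × X)) : Prop :=
  ∃ n : ℕ, 1 ≤ n ∧ RevCRWitness F n

/-- A self-map is separated turbulent. -/
def SepTurbulent {Z : Type*} [TopologicalSpace Z] (h : Z → Z) : Prop :=
  ∃ K L : Set Z, K.Nonempty ∧ L.Nonempty ∧ IsClosed K ∧ IsClosed L ∧
    Disjoint K L ∧ K ∪ L ⊆ h '' K ∩ h '' L

/-- A self-map is turbulent. -/
def Turbulent {Z : Type*} [TopologicalSpace Z] (h : Z → Z) : Prop :=
  ∃ K L : Set Z, K.Nonempty ∧ L.Nonempty ∧ IsClosed K ∧ IsClosed L ∧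
    (K ∩ L).Subsingleton ∧ K ∪ L ⊆ h '' K ∩ h '' L

/-- The infinite Mahavier product `X_F^+`. -/
def MahavierSeq {X : Type*} (F : Set (X × X)) : Set (ℕ → X) :=
  {x | ∀ i : ℕ, (x i, x (i + 1)) ∈ F}

/-- The shift map `σ_F^+` on `X_F^+`. -/
def shiftMap {X : Type*} (F : Set (X × X)) : MahavierSeq F → MahavierSeq F :=
  fun x => ⟨fun n => x.1 (n + 1), fun i => x.2 (i + 1)⟩

namespace Stmt15Aux

noncomputable def gfun (a b : ℝ) (m : ℕ) : ℕ → ℝ :=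
  fun i => if i ≤ m then b ^ i else b ^ m * a ^ (i - m)

noncomputable def pth (a b : ℝ) (n m : ℕ) (x : ℝ) : Fin (n + 1) → ℝ :=
  fun i => x * gfun a b m i.val

def rel (a b : ℝ) : Set (ℝ × ℝ) :=
  {p : ℝ × ℝ | p.1 ∈ Set.Icc 0 1 ∧ p.2 = a * p.1} ∪
    {p : ℝ × ℝ | p.1 ∈ Set.Icc 0 (1 / b) ∧ p.2 = b * p.1}

lemma gfun_last (a b : ℝ) {m n : ℕ} (hm : m ≤ n) :
    gfun a b m n = b ^ m * a ^ (n - m) := by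
  unfold gfun
  split_ifs with h
  · have : m = n := le_antisymm hm h
    subst this; simp
  · rfl

lemma pth_zero (a b : ℝ) (n m : ℕ) (x : ℝ) : pth a b n m x 0 = x := by
  simp [pth, gfun]

lemma pth_last (a b : ℝ) {n m : ℕ} (hm : m ≤ n) (x : ℝ) :
    pth a b n m x (Fin.last n) = x * (b ^ m * a ^ (n - m)) := by
  simp [pth, Fin.val_last, gfun_last a b hm]

lemma cover {a b s₁ s₂ : ℝ} (ha : 0 < a) (hb : 0 < b) (hr : b * s₁ = a * s₂) :
    ∀ n : ℕ, ∀ y : ℝ, a ^ n * s₁ ≤ y → y ≤ b ^ n * s₂ →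
      ∃ m ≤ n, b ^ m * a ^ (n - m) * s₁ ≤ y ∧ y ≤ b ^ m * a ^ (n - m) * s₂ := by
  intro n
  induction n with
  | zero => intro y h1 h2; exact ⟨0, le_refl 0, by simpa using h1, by simpa using h2⟩
  | succ n ih =>
    intro y h1 h2
    by_cases hy : y ≤ a * (b ^ n * s₂)
    · have h1' : a ^ n * s₁ ≤ y / a := by
        rw [le_div_iff₀ ha]
        calc a ^ n * s₁ * a = a ^ (n + 1) * s₁ := by ring
          _ ≤ y := h1
      have h2' : y / a ≤ b ^ n * s₂ := by
        rw [div_le_iff₀ ha]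
        linarith [hy]
      obtain ⟨m, hm, hl, hu⟩ := ih (y / a) h1' h2'
      refine ⟨m, le_trans hm (Nat.le_succ n), ?_, ?_⟩
      · have h3 : (n + 1) - m = (n - m) + 1 := by omega
        rw [h3, pow_succ]
        rw [le_div_iff₀ ha] at hl
        nlinarith
      · have h3 : (n + 1) - m = (n - m) + 1 := by omega
        rw [h3, pow_succ]
        rw [div_le_iff₀ ha] at hu
        nlinarith
    · push_neg at hy
      refine ⟨n + 1, le_refl _, ?_, ?_⟩
      · have h4 : b ^ (n + 1) * s₁ = b ^ n * (b * s₁) := by ring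
        rw [Nat.sub_self, pow_zero, mul_one, h4, hr]
        nlinarith
      · rw [Nat.sub_self, pow_zero, mul_one]
        exact h2

lemma pth_mem {a b : ℝ} (ha0 : 0 < a) (ha1 : a < 1) (hb : 1 < b)
    {n m : ℕ} {x : ℝ} (hx0 : 0 ≤ x) (hx1 : x * b ^ m ≤ 1) :
    pth a b n m x ∈ Mahavier (rel a b) n := by
  have hb0 : (0:ℝ) < b := lt_trans one_pos hb
  intro i
  have hcs : (i.castSucc : ℕ) = (i : ℕ) := rfl
  have hsu : (i.succ : ℕ) = (i : ℕ) + 1 := rfl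
  simp only [pth, hcs, hsu]
  by_cases h1 : (i : ℕ) + 1 ≤ m
  · right
    have hi : (i : ℕ) ≤ m := le_trans (Nat.le_succ _) h1
    have hg1 : gfun a b m (i : ℕ) = b ^ (i : ℕ) := if_pos hi
    have hg2 : gfun a b m ((i : ℕ) + 1) = b ^ ((i : ℕ) + 1) := if_pos h1
    rw [hg1, hg2]
    constructor
    · constructor
      · positivity
      · rw [le_div_iff₀ hb0]
        calc x * b ^ (i:ℕ) * b = x * b ^ ((i:ℕ) + 1) := by ring
          _ ≤ x * b ^ m := by
              gcongr
              exact hb.le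
          _ ≤ 1 := hx1
    · rw [pow_succ]; ring
  · left
    push_neg at h1
    have hmi : m ≤ (i : ℕ) := by omega
    have hg2 : gfun a b m ((i : ℕ) + 1) = b ^ m * a ^ ((i:ℕ) + 1 - m) := by
      unfold gfun; rw [if_neg (by omega)]
    have hfst : x * gfun a b m (i : ℕ) ∈ Set.Icc (0:ℝ) 1 := by
      constructor
      · unfold gfun
        split_ifs <;> positivity
      · unfold gfun
        split_ifs with h
        · have : m = (i:ℕ) := le_antisymm hmi h
          rw [← this]
          exact hx1
        · have hp1 : a ^ ((i:ℕ) - m) ≤ 1 := pow_le_one₀ ha0.le ha1.le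
          have hp2 : (0:ℝ) ≤ b ^ m := by positivity
          have hp3 : (0:ℝ) ≤ a ^ ((i:ℕ) - m) := by positivity
          nlinarith
    refine ⟨hfst, ?_⟩
    rw [hg2]
    by_cases h : (i:ℕ) ≤ m
    · have hme : m = (i:ℕ) := le_antisymm hmi h
      have hg1 : gfun a b m (i:ℕ) = b ^ (i:ℕ) := if_pos h
      rw [hg1, hme]
      have h5 : (i:ℕ) + 1 - (i:ℕ) = 1 := by omega
      rw [h5]; ring
    · have hg1 : gfun a b m (i:ℕ) = b ^ m * a ^ ((i:ℕ) - m) := by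
        unfold gfun; rw [if_neg h]
      rw [hg1]
      have h5 : (i:ℕ) + 1 - m = ((i:ℕ) - m) + 1 := by omega
      rw [h5, pow_succ]; ring

noncomputable def tube (a b : ℝ) (n : ℕ) (D : ℕ → Set ℝ) : Set (Fin (n + 1) → ℝ) :=
  ⋃ m ∈ Finset.range (n + 1), pth a b n m '' D m

lemma tube_closed (a b : ℝ) (n : ℕ) (D : ℕ → Set ℝ) (hD : ∀ m, IsCompact (D m)) :
    IsClosed (tube a b n D) := by
  apply Set.Finite.isClosed_biUnion (Finset.finite_toSet _)
  intro m _
  exact (((hD m).image (by continuity)).isClosed)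

lemma mem_tube {a b : ℝ} {n m : ℕ} (hm : m ≤ n) {x : ℝ} {D : ℕ → Set ℝ} (hx : x ∈ D m) :
    pth a b n m x ∈ tube a b n D := by
  exact Set.mem_biUnion (Finset.mem_range.mpr (by omega)) ⟨x, hx, rfl⟩

lemma tube_elim {a b : ℝ} {n : ℕ} {D : ℕ → Set ℝ} {p : Fin (n + 1) → ℝ}
    (hp : p ∈ tube a b n D) : ∃ m ≤ n, ∃ x ∈ D m, p = pth a b n m x := by
  simp only [tube, Set.mem_iUnion, Finset.mem_range, Set.mem_image] at hp
  obtain ⟨m, hm, x, hx, hpx⟩ := hp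
  exact ⟨m, by omega, x, hx, hpx.symm⟩


/-- Projection facts for a tube over constant interval domain. -/
lemma tube_fst {a b : ℝ} {n : ℕ} {u₁ u₂ : ℝ} {p : Fin (n + 1) → ℝ}
    (hp : p ∈ tube a b n (fun _ => Icc u₁ u₂)) : p 0 ∈ Icc u₁ u₂ := by
  obtain ⟨m, hm, x, hx, rfl⟩ := tube_elim hp
  rw [pth_zero]
  exact hx

lemma tube_sub_M {a b : ℝ} (ha0 : 0 < a) (ha1 : a < 1) (hb : 1 < b) {n : ℕ}
    {u₁ u₂ : ℝ} (hu1 : 0 ≤ u₁) (hdom : u₂ * b ^ n ≤ 1) :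
    tube a b n (fun _ => Icc u₁ u₂) ⊆ Mahavier (rel a b) n := by
  intro p hp
  obtain ⟨m, hm, x, hx, rfl⟩ := tube_elim hp
  obtain ⟨hx1, hx2⟩ := hx
  have hx0 : 0 ≤ x := le_trans hu1 hx1
  apply pth_mem ha0 ha1 hb hx0
  have hbm : b ^ m ≤ b ^ n := pow_le_pow_right₀ hb.le hm
  have hbm0 : (0:ℝ) < b ^ m := by positivity
  nlinarith

lemma tube_last_image {a b : ℝ} (ha0 : 0 < a) (hb0 : 0 < b) {n : ℕ}
    {u₁ u₂ : ℝ} (hr : b * u₁ = a * u₂) {y : ℝ}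
    (h1 : a ^ n * u₁ ≤ y) (h2 : y ≤ b ^ n * u₂) :
    y ∈ (fun p => p (Fin.last n)) '' tube a b n (fun _ => Icc u₁ u₂) := by
  obtain ⟨m, hm, hl, hu⟩ := cover ha0 hb0 hr n y h1 h2
  set μ : ℝ := b ^ m * a ^ (n - m) with hμ
  have hμ0 : 0 < μ := by positivity
  refine ⟨pth a b n m (y / μ), mem_tube hm ?_, ?_⟩
  · constructor
    · rw [le_div_iff₀ hμ0]; nlinarith
    · rw [div_le_iff₀ hμ0]; nlinarith
  · show pth a b n m (y / μ) (Fin.last n) = y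
    rw [pth_last a b hm, div_mul_cancel₀ _ (ne_of_gt hμ0)]

lemma crwitness {a b : ℝ} (ha0 : 0 < a) (ha1 : a < 1) (hb : 1 < b)
    {n : ℕ} {s₁ s₂ t₁ t₂ : ℝ}
    (hs₁ : 0 < s₁) (hst : s₂ < t₁)
    (hs : b * s₁ = a * s₂) (ht : b * t₁ = a * t₂)
    (hdom : t₂ * b ^ n ≤ 1)
    (hlow : a ^ n * t₁ ≤ s₁) (hhigh : t₂ ≤ b ^ n * s₂) :
    CRWitness (rel a b) n := by
  have hb0 : (0:ℝ) < b := lt_trans one_pos hb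
  have hs12 : s₁ ≤ s₂ := by nlinarith
  have ht₁ : 0 < t₁ := lt_trans hs₁ (lt_of_le_of_lt hs12 hst)
  have ht12 : t₁ ≤ t₂ := by nlinarith
  have hs₂ : 0 < s₂ := lt_of_lt_of_le hs₁ hs12
  have ht₂ : 0 < t₂ := lt_of_lt_of_le ht₁ ht12
  have hsdom : s₂ * b ^ n ≤ 1 := by
    have : s₂ ≤ t₂ := le_trans hst.le ht12
    nlinarith [pow_pos hb0 n]
  have han : a ^ n ≤ 1 := pow_le_one₀ ha0.le ha1.le
  have hbn : 1 ≤ b ^ n := one_le_pow₀ hb.le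
  refine ⟨tube a b n (fun _ => Icc s₁ s₂), tube a b n (fun _ => Icc t₁ t₂),
    ⟨pth a b n 0 s₁, mem_tube (Nat.zero_le n) ⟨le_refl _, hs12⟩⟩,
    ⟨pth a b n 0 t₁, mem_tube (Nat.zero_le n) ⟨le_refl _, ht12⟩⟩,
    tube_closed a b n _ (fun _ => isCompact_Icc),
    tube_closed a b n _ (fun _ => isCompact_Icc),
    tube_sub_M ha0 ha1 hb hs₁.le hsdom,
    tube_sub_M ha0 ha1 hb ht₁.le hdom,
    ?_, ?_⟩
  · rw [Set.disjoint_left]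
    intro p hpK hpL
    have h1 := tube_fst hpK
    have h2 := tube_fst hpL
    have := h1.2
    have := h2.1
    linarith
  · rintro y (⟨p, hp, rfl⟩ | ⟨p, hp, rfl⟩) <;>
    [ (have hy := tube_fst hp); (have hy := tube_fst hp) ]
    · constructor
      · exact tube_last_image ha0 hb0 hs (by nlinarith [hy.1]) (by nlinarith [hy.2])
      · exact tube_last_image ha0 hb0 ht (by nlinarith [hy.1]) (by nlinarith [hy.2])
    · constructor
      · exact tube_last_image ha0 hb0 hs (by nlinarith [hy.1]) (by nlinarith [hy.2])
      · exact tube_last_image ha0 hb0 ht (by nlinarith [hy.1]) (by nlinarith [hy.2])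

/-! ### The reverse CR witness construction -/

noncomputable def mu (a b : ℝ) (n m : ℕ) : ℝ := b ^ m * a ^ (n - m)

lemma mu_pos {a b : ℝ} (ha0 : 0 < a) (hb0 : 0 < b) (n m : ℕ) : 0 < mu a b n m := by
  unfold mu; positivity

/-- Reverse tube: domains chosen so that endpoints land in `Icc u₁ u₂`. -/
noncomputable def rtube (a b : ℝ) (n : ℕ) (u₁ u₂ : ℝ) : Set (Fin (n + 1) → ℝ) :=
  tube a b n (fun m => Icc (u₁ / mu a b n m) (u₂ / mu a b n m))

lemma rtube_last {a b : ℝ} (ha0 : 0 < a) (hb0 : 0 < b) {n : ℕ} {u₁ u₂ : ℝ}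
    {p : Fin (n + 1) → ℝ} (hp : p ∈ rtube a b n u₁ u₂) :
    p (Fin.last n) ∈ Icc u₁ u₂ := by
  obtain ⟨m, hm, x, hx, rfl⟩ := tube_elim hp
  rw [pth_last a b hm]
  have hμ0 : 0 < mu a b n m := mu_pos ha0 hb0 n m
  obtain ⟨hx1, hx2⟩ := hx
  rw [div_le_iff₀ hμ0] at hx1
  rw [le_div_iff₀ hμ0] at hx2
  constructor
  · calc u₁ ≤ x * mu a b n m := hx1
      _ = x * (b ^ m * a ^ (n - m)) := rfl
  · calc x * (b ^ m * a ^ (n - m)) = x * mu a b n m := rfl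
      _ ≤ u₂ := hx2

lemma rtube_sub_M {a b : ℝ} (ha0 : 0 < a) (ha1 : a < 1) (hb : 1 < b) {n : ℕ}
    {u₁ u₂ : ℝ} (hu1 : 0 ≤ u₁) (hdom : u₂ ≤ a ^ n) :
    rtube a b n u₁ u₂ ⊆ Mahavier (rel a b) n := by
  have hb0 : (0:ℝ) < b := lt_trans one_pos hb
  intro p hp
  obtain ⟨m, hm, x, hx, rfl⟩ := tube_elim hp
  have hμ0 : 0 < mu a b n m := mu_pos ha0 hb0 n m
  obtain ⟨hx1, hx2⟩ := hx
  have hx0 : 0 ≤ x := le_trans (by positivity) hx1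
  apply pth_mem ha0 ha1 hb hx0
  rw [le_div_iff₀ hμ0] at hx2
  have hpow : a ^ n ≤ a ^ (n - m) := pow_le_pow_of_le_one ha0.le ha1.le (Nat.sub_le n m)
  have hμ : mu a b n m = b ^ m * a ^ (n - m) := rfl
  rw [hμ] at hx2
  have hanm : (0:ℝ) < a ^ (n - m) := by positivity
  have hbm : (0:ℝ) < b ^ m := by positivity
  nlinarith [mul_nonneg (mul_nonneg hx0 hbm.le) hanm.le]

lemma rtube_fst_image {a b : ℝ} (ha0 : 0 < a) (hb0 : 0 < b) {n : ℕ}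
    {u₁ u₂ : ℝ} (hr : b * u₁ = a * u₂) {y : ℝ}
    (h1 : u₁ ≤ y * b ^ n) (h2 : y * a ^ n ≤ u₂) :
    y ∈ (fun p => p 0) '' rtube a b n u₁ u₂ := by
  have ha' : (0:ℝ) < 1 / b := by positivity
  have hb' : (0:ℝ) < 1 / a := by positivity
  have hr' : (1 / a) * u₁ = (1 / b) * u₂ := by
    field_simp
    linarith [hr]
  have hc1 : (1 / b) ^ n * u₁ ≤ y := by
    rw [div_pow, one_pow, div_mul_eq_mul_div, div_le_iff₀ (by positivity)]
    linarith [h1]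
  have hc2 : y ≤ (1 / a) ^ n * u₂ := by
    rw [div_pow, one_pow, mul_comm, mul_one_div, le_div_iff₀ (by positivity)]
    linarith [h2]
  obtain ⟨m', hm', hl, hu⟩ := cover ha' hb' hr' n y hc1 hc2
  set m : ℕ := n - m' with hmdef
  have hm : m ≤ n := Nat.sub_le n m'
  have hnm : n - m = m' := by omega
  have hμ0 : 0 < mu a b n m := mu_pos ha0 hb0 n m
  have hkey : ∀ u : ℝ, (1 / a) ^ m' * (1 / b) ^ (n - m') * u = u / mu a b n m := by
    intro u
    have hμ : mu a b n m = b ^ m * a ^ m' := by rw [mu, hnm]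
    have hμ0' : (b:ℝ) ^ m * a ^ m' ≠ 0 := by positivity
    rw [hμ, eq_div_iff hμ0']
    field_simp
    rw [← hmdef, one_div_pow, one_div_pow]; field_simp
  rw [hkey] at hl
  rw [hkey] at hu
  exact ⟨pth a b n m y, mem_tube hm ⟨hl, hu⟩, pth_zero a b n m y⟩

lemma revwitness {a b : ℝ} (ha0 : 0 < a) (ha1 : a < 1) (hb : 1 < b)
    {n : ℕ} {e₁ e₂ f₁ f₂ : ℝ}
    (he₁ : 0 < e₁) (hef : e₂ < f₁)
    (he : b * e₁ = a * e₂) (hf : b * f₁ = a * f₂)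
    (hdom : f₂ ≤ a ^ n)
    (hlow : f₁ ≤ e₁ * b ^ n) (hhigh : f₂ * a ^ n ≤ e₂) :
    RevCRWitness (rel a b) n := by
  have hb0 : (0:ℝ) < b := lt_trans one_pos hb
  have he12 : e₁ ≤ e₂ := by nlinarith
  have hf₁ : 0 < f₁ := lt_trans he₁ (lt_of_le_of_lt he12 hef)
  have hf12 : f₁ ≤ f₂ := by nlinarith
  have he₂ : 0 < e₂ := lt_of_lt_of_le he₁ he12
  have hf₂ : 0 < f₂ := lt_of_lt_of_le hf₁ hf12
  have hedom : e₂ ≤ a ^ n := le_trans (le_trans hef.le hf12) hdom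
  have han : a ^ n ≤ 1 := pow_le_one₀ ha0.le ha1.le
  have hbn : 1 ≤ b ^ n := one_le_pow₀ hb.le
  have hμ0 : 0 < mu a b n 0 := mu_pos ha0 hb0 n 0
  refine ⟨rtube a b n e₁ e₂, rtube a b n f₁ f₂,
    ⟨pth a b n 0 (e₁ / mu a b n 0), mem_tube (Nat.zero_le n)
      ⟨le_refl _, by gcongr⟩⟩,
    ⟨pth a b n 0 (f₁ / mu a b n 0), mem_tube (Nat.zero_le n)
      ⟨le_refl _, by gcongr⟩⟩,
    tube_closed a b n _ (fun _ => isCompact_Icc),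
    tube_closed a b n _ (fun _ => isCompact_Icc),
    rtube_sub_M ha0 ha1 hb he₁.le hedom,
    rtube_sub_M ha0 ha1 hb hf₁.le hdom,
    ?_, ?_⟩
  · rw [Set.disjoint_left]
    intro p hpK hpL
    have h1 := rtube_last ha0 hb0 hpK
    have h2 := rtube_last ha0 hb0 hpL
    have := h1.2
    have := h2.1
    linarith
  · rintro y (⟨p, hp, rfl⟩ | ⟨p, hp, rfl⟩) <;>
    [ (have hy := rtube_last ha0 hb0 hp); (have hy := rtube_last ha0 hb0 hp) ]
    · constructor
      · exact rtube_fst_image ha0 hb0 he (by nlinarith [hy.1]) (by nlinarith [hy.2]) 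
      · exact rtube_fst_image ha0 hb0 hf (by nlinarith [hy.1]) (by nlinarith [hy.2])
    · constructor
      · exact rtube_fst_image ha0 hb0 he (by nlinarith [hy.1]) (by nlinarith [hy.2])
      · exact rtube_fst_image ha0 hb0 hf (by nlinarith [hy.1]) (by nlinarith [hy.2])

theorem stmt15_test (a b : ℝ) (ha0 : 0 < a) (ha1 : a < 1) (hb : 1 < b) :
    (∃ n : ℕ, 1 ≤ n ∧ CRWitness (rel a b) n) ∧
    (∃ n : ℕ, 1 ≤ n ∧ RevCRWitness (rel a b) n) := by
  have hb0 : (0:ℝ) < b := lt_trans one_pos hb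
  obtain ⟨N₁, hN₁⟩ := exists_pow_lt_of_lt_one (show (0:ℝ) < 1/(2*b) by positivity) ha1
  obtain ⟨N₂, hN₂⟩ := pow_unbounded_of_one_lt (2/a : ℝ) hb
  set N := max N₁ N₂ with hN
  set n := N + 1 with hn
  have hAN : a ^ N ≤ 1 / (2*b) :=
    le_trans (pow_le_pow_of_le_one ha0.le ha1.le (le_max_left _ _)) hN₁.le
  have hBN : 2 / a ≤ b ^ N := le_trans hN₂.le (pow_le_pow_right₀ hb.le (le_max_right _ _))
  have hA' : a ^ n * (2*b) ≤ a := by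
    rw [le_div_iff₀ (by positivity : (0:ℝ) < 2*b)] at hAN
    have : a ^ n = a * a ^ N := by rw [hn, pow_succ]; ring
    rw [this]
    nlinarith
  have hB' : 2 * b ≤ a * b ^ n := by
    rw [div_le_iff₀ ha0] at hBN
    have : b ^ n = b ^ N * b := by rw [hn, pow_succ]
    rw [this]
    nlinarith
  have hbn : (0:ℝ) < b ^ n := by positivity
  have hbn1 : (0:ℝ) < b ^ (n+1) := by positivity
  have hbn2 : (0:ℝ) < b ^ (n+2) := by positivity
  have han : (0:ℝ) < a ^ n := by positivity
  constructor
  · refine ⟨n, by omega, ?_⟩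
    refine crwitness ha0 ha1 hb
      (s₁ := a^2/(2*b^(n+2))) (s₂ := a/(2*b^(n+1))) (t₁ := a/(b^(n+1))) (t₂ := 1/(b^n))
      (by positivity) ?_ ?_ ?_ ?_ ?_ ?_
    · -- s₂ < t₁
      rw [div_lt_div_iff₀ (by positivity) (by positivity)]
      nlinarith
    · -- b * s₁ = a * s₂
      field_simp
      ring
    · -- b * t₁ = a * t₂
      field_simp
      ring
    · -- t₂ * b ^ n ≤ 1
      rw [div_mul_eq_mul_div, div_le_one hbn]
      nlinarith
    · -- a ^ n * t₁ ≤ s₁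
      rw [mul_div_assoc', div_le_div_iff₀ hbn1 (by positivity)]
      have h2 := mul_le_mul_of_nonneg_right hA' (by positivity : (0:ℝ) ≤ a * b ^ (n+1))
      calc a ^ n * a * (2 * b ^ (n+2)) = a ^ n * (2*b) * (a * b ^ (n+1)) := by ring
        _ ≤ a * (a * b ^ (n+1)) := h2
        _ = a ^ 2 * b ^ (n+1) := by ring
    · -- t₂ ≤ b ^ n * s₂
      rw [mul_div_assoc', div_le_div_iff₀ hbn (by positivity)]
      have h2 := mul_le_mul_of_nonneg_right hB' hbn.le
      calc 1 * (2 * b ^ (n+1)) = 2 * b * b ^ n := by ring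
        _ ≤ a * b ^ n * b ^ n := h2
        _ = b ^ n * a * b ^ n := by ring
  · refine ⟨n, by omega, ?_⟩
    refine revwitness ha0 ha1 hb
      (e₁ := a^(n+2)/(2*b^2)) (e₂ := a^(n+1)/(2*b)) (f₁ := a^(n+1)/b) (f₂ := a^n)
      (by positivity) ?_ ?_ ?_ ?_ ?_ ?_
    · -- e₂ < f₁
      rw [div_lt_div_iff₀ (by positivity) hb0]
      nlinarith [pow_pos ha0 (n+1)]
    · -- b * e₁ = a * e₂
      field_simp
      ring
    · -- b * f₁ = a * f₂
      field_simp
      ring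
    · -- f₂ ≤ a ^ n
      exact le_refl _
    · -- f₁ ≤ e₁ * b ^ n
      rw [div_mul_eq_mul_div, div_le_div_iff₀ hb0 (by positivity)]
      have h2 := mul_le_mul_of_nonneg_right hB' (by positivity : (0:ℝ) ≤ a ^ (n+1) * b)
      calc a ^ (n+1) * (2 * b ^ 2) = 2 * b * (a ^ (n+1) * b) := by ring
        _ ≤ a * b ^ n * (a ^ (n+1) * b) := h2
        _ = a ^ (n+2) * b ^ n * b := by ring
    · -- f₂ * a ^ n ≤ e₂
      rw [le_div_iff₀ (by positivity : (0:ℝ) < 2*b)]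
      have h2 := mul_le_mul_of_nonneg_right hA' han.le
      calc a ^ n * a ^ n * (2 * b) = a ^ n * (2*b) * a ^ n := by ring
        _ ≤ a * a ^ n := h2
        _ = a ^ (n+1) := by ring

end Stmt15Aux


/-- For all `0 < a < 1 < b`, the closed relation
`F_{ab} = {(x, ax) : x ∈ [0,1]} ∪ {(x, bx) : x ∈ [0, 1/b]}` on `[0,1]` is both CR-turbulent
and reverse CR-turbulent. -/
theorem stmt15 (a b : ℝ) (ha0 : 0 < a) (ha1 : a < 1) (hb : 1 < b) :
    CRTurbulent ({p : ℝ × ℝ | p.1 ∈ Set.Icc 0 1 ∧ p.2 = a * p.1} ∪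
        {p : ℝ × ℝ | p.1 ∈ Set.Icc 0 (1 / b) ∧ p.2 = b * p.1}) ∧
    RevCRTurbulent ({p : ℝ × ℝ | p.1 ∈ Set.Icc 0 1 ∧ p.2 = a * p.1} ∪
        {p : ℝ × ℝ | p.1 ∈ Set.Icc 0 (1 / b) ∧ p.2 = b * p.1}) := by
  obtain ⟨h1, h2⟩ := Stmt15Aux.stmt15_test a b ha0 ha1 hb
  exact ⟨h1, h2⟩
end

section
/- Let C be a compact metric space and let X ⊆ C × [0,1] be a blade space over C. Let Y be a metric space, let A, B be nonempty disjoint closed subsets of Y with d(A,B) > 0, and let φ : X → Y be continuous. For each c ∈ C, let M(c) denote the (A,B)-zigzag number of the restriction of φ to the fiber X ∩ ({c} × [0,1]) (zigzag sets being taken with respect to the ordering of the second coordinate). Then the set {M(c) : c ∈ C} is bounded. -/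
open Set

/-! Consecutive points of a zigzag set are mapped into different sets among `A`, `B`, hence at
distance at least the `ε > 0` separating `A` from `B`. By uniform continuity of `φ` on the
compact set `X`, consecutive points of the zigzag set on a fiber are then at least some `δ > 0`
apart, while the whole fiber has length at most `diam X`, so a zigzag set has at most
`diam X / δ + 1` points. -/

def IsZigzag {Y : Type*} (A B : Set Y) {m : ℕ} (f : Fin m → Y) : Prop :=
  (∀ i : Fin m, (i.val % 2 = 0 → f i ∈ A) ∧ (i.val % 2 = 1 → f i ∈ B)) ∨
    (∀ i : Fin m, (i.val % 2 = 0 → f i ∈ B) ∧ (i.val % 2 = 1 → f i ∈ A))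

theorem IsZigzag.le_dist_succ {Y : Type*} [PseudoMetricSpace Y] {A B : Set Y} {ε : ℝ}
    (hAB : ∀ a ∈ A, ∀ b ∈ B, ε ≤ dist a b) {n : ℕ} {f : Fin (n + 1) → Y}
    (hf : IsZigzag A B f) (i : Fin n) : ε ≤ dist (f i.castSucc) (f i.succ) := by
  have hsucc : (i.succ : ℕ) = i + 1 := rfl
  rcases Nat.mod_two_eq_zero_or_one i with hi | hi <;> rcases hf with hf | hf
  · exact hAB _ ((hf _).1 hi) _ ((hf _).2 (by omega))
  · exact dist_comm (f _) _ ▸ hAB _ ((hf _).2 (by omega)) _ ((hf _).1 hi)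
  · exact dist_comm (f _) _ ▸ hAB _ ((hf _).1 (by omega)) _ ((hf _).2 hi)
  · exact hAB _ ((hf _).2 hi) _ ((hf _).1 (by omega))

theorem Fin.add_mul_le_of_add_le_succ {n : ℕ} {x : Fin (n + 1) → ℝ} {δ : ℝ}
    (h : ∀ i : Fin n, x i.castSucc + δ ≤ x i.succ) (i : Fin (n + 1)) :
    x 0 + i.val * δ ≤ x i := by
  induction i using Fin.induction with
  | zero => simp
  | succ i ih =>
    have := h i
    simp only [Fin.val_succ, Fin.val_castSucc, Nat.cast_succ] at ih ⊢
    linarith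

theorem dist_mk_left_eq {C : Type*} [PseudoMetricSpace C] (c : C) (s t : ℝ) :
    dist ((c, s) : C × ℝ) (c, t) = dist s t := by
  simp [Prod.dist_eq]

theorem UniformContinuous.exists_pos_add_le_of_le_dist {C Y : Type*} [PseudoMetricSpace C]
    [PseudoMetricSpace Y] {X : Set (C × ℝ)} {φ : X → Y} (hφ : UniformContinuous φ) {ε : ℝ}
    (hε : 0 < ε) :
    ∃ δ > 0, ∀ (c : C) (s t : ℝ) (hs : (c, s) ∈ X) (ht : (c, t) ∈ X), s ≤ t →
      ε ≤ dist (φ ⟨_, hs⟩) (φ ⟨_, ht⟩) → s + δ ≤ t := by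
  obtain ⟨δ, hδ, hφδ⟩ := Metric.uniformContinuous_iff.1 hφ ε hε
  refine ⟨δ, hδ, fun c s t hs ht hst hfar => ?_⟩
  have : δ ≤ dist s t := by
    by_contra! hnear
    refine (hφδ (a := ⟨_, hs⟩) (b := ⟨_, ht⟩) ?_).not_ge hfar
    rwa [Subtype.dist_eq, dist_mk_left_eq]
  rw [Real.dist_eq, abs_of_nonpos (by linarith)] at this
  linarith

theorem stmt17_general {C : Type*} [MetricSpace C] (X : Set (C × ℝ))
    (hXcomp : IsCompact X)
    {Y : Type*} [MetricSpace Y] (A B : Set Y)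
    (hd : ∃ ε > 0, ∀ a ∈ A, ∀ b ∈ B, ε ≤ dist a b)
    (φ : X → Y) (hφ : Continuous φ) :
    ∃ M : ℕ, ∀ (c : C) (m : ℕ) (x : Fin m → ℝ) (hmem : ∀ i, (c, x i) ∈ X),
      StrictMono x →
      ((∀ i : Fin m, (i.val % 2 = 0 → φ ⟨(c, x i), hmem i⟩ ∈ A) ∧
          (i.val % 2 = 1 → φ ⟨(c, x i), hmem i⟩ ∈ B)) ∨
       (∀ i : Fin m, (i.val % 2 = 0 → φ ⟨(c, x i), hmem i⟩ ∈ B) ∧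
          (i.val % 2 = 1 → φ ⟨(c, x i), hmem i⟩ ∈ A))) →
      m ≤ M := by
  obtain ⟨ε, hε, hAB⟩ := hd
  have : CompactSpace X := isCompact_iff_compactSpace.mp hXcomp
  obtain ⟨δ, hδ, hgap⟩ :=
    (CompactSpace.uniformContinuous_of_continuous hφ).exists_pos_add_le_of_le_dist hε
  obtain ⟨L, hL⟩ := Metric.isBounded_iff.1 hXcomp.isBounded
  refine ⟨⌈L / δ⌉₊ + 1, fun c m x hmem hx hzig => ?_⟩
  obtain _ | n := m
  · exact Nat.zero_le _
  have hspread : x 0 + n * δ ≤ x (Fin.last n) :=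
    Fin.add_mul_le_of_add_le_succ (fun i => hgap c _ _ _ _ (hx Fin.castSucc_lt_succ).le
      (IsZigzag.le_dist_succ hAB hzig i)) (Fin.last n)
  have hlength : x (Fin.last n) - x 0 ≤ L := by
    have := hL (hmem 0) (hmem (Fin.last n))
    rw [dist_mk_left_eq, Real.dist_eq, abs_sub_comm] at this
    exact (le_abs_self _).trans this
  have : (n : ℝ) ≤ L / δ := by rw [le_div_iff₀ hδ]; linarith
  exact Nat.succ_le_succ (Nat.cast_le.1 (this.trans (Nat.le_ceil _)))

/-- Let `X ⊆ C × [0,1]` be a blade space over a compact metric space `C`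
(a compact set whose fiber over each `c ∈ C` is `{c} × [0, ρ(c)]`), let `A, B` be nonempty
disjoint closed subsets of a metric space `Y` with `d(A,B) > 0`, and let `φ : X → Y` be
continuous. Then the `(A,B)`-zigzag numbers `M(c)` of the restrictions of `φ` to the fibers
are uniformly bounded: there is `M ∈ ℕ` such that for each `c ∈ C`, every `(A,B)`-zigzag set
for `φ` restricted to the fiber over `c` has cardinality at most `M`. -/
theorem stmt17 {C : Type*} [MetricSpace C] [CompactSpace C] (X : Set (C × ℝ))
    (hXcomp : IsCompact X) (hXsub : X ⊆ (univ : Set C) ×ˢ Icc (0:ℝ) 1)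
    (hblade : ∀ c : C, ∃ ρ ∈ Icc (0:ℝ) 1, {t : ℝ | (c, t) ∈ X} = Icc 0 ρ)
    {Y : Type*} [MetricSpace Y] (A B : Set Y)
    (hA : A.Nonempty) (hB : B.Nonempty) (hAc : IsClosed A) (hBc : IsClosed B)
    (hAB : Disjoint A B) (hd : ∃ ε > 0, ∀ a ∈ A, ∀ b ∈ B, ε ≤ dist a b)
    (φ : X → Y) (hφ : Continuous φ) :
    ∃ M : ℕ, ∀ (c : C) (m : ℕ) (x : Fin m → ℝ) (hmem : ∀ i, (c, x i) ∈ X),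
      StrictMono x →
      ((∀ i : Fin m, (i.val % 2 = 0 → φ ⟨(c, x i), hmem i⟩ ∈ A) ∧
          (i.val % 2 = 1 → φ ⟨(c, x i), hmem i⟩ ∈ B)) ∨
       (∀ i : Fin m, (i.val % 2 = 0 → φ ⟨(c, x i), hmem i⟩ ∈ B) ∧
          (i.val % 2 = 1 → φ ⟨(c, x i), hmem i⟩ ∈ A))) →
      m ≤ M :=
  stmt17_general X hXcomp A B hd φ hφ
end

section
/- Let C be a nonempty closed subset of the Cantor set, let X ⊆ C × [0,1] be a blade space over C, and let g : X → X be a fiber-injection fixing the base, i.e., g is continuous and there exist a continuous map μ : C → C and, for each c ∈ C, a continuous injection h_c from the fiber X ∩ ({c} × [0,1]) into the fiber X ∩ ({μ(c)} × [0,1]) such that g(c,x) = (μ(c), h_c(x)) for all (c,x) ∈ X and h_c(0) = 0 for all c ∈ C. Then g is not separated, continuum-wise semi-turbulent. -/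
/-!
Suppose `g` were semi-turbulent via `A, B, φ, f`. Then `φ(A)` and `φ(B)` form a horseshoe for `f`:
every `0`–`1` sequence is the itinerary of a point of `φ(g(A))`. Since `g(A)` is connected and the
base lies in the totally disconnected Cantor set, `g(A)` sits in a vertical segment `{c} × [0, β]`
of `X`, and fibrewise injectivity together with `h_c(0) = 0` makes the height of `gⁿ(c, t)`
increasing in `t`. A Helly-type selection yields times `n_j` such that `g^{n_j}(c, t)` converges
for all but countably many `t`. Distinct itineraries come from distinct `t`, and there are
uncountably many itineraries visiting `φ(A)` at all times `n_{3j}` and `φ(B)` at all times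
`n_{3j+1}`; for one of them the orbit converges, and its limit lies in `φ(A) ∩ φ(B) = ∅`.
-/

open Set

/-- A continuous self-map `h` of a compact metric-type space `Z` is
*separated, continuum-wise semi-turbulent* if there are a continuum `Y` (a nonempty compact
connected metric space), disjoint subcontinua `A, B ⊆ Z`, and continuous maps `φ : Z → Y`,
`f : Y → Y` with `f ∘ φ = φ ∘ h`, `φ(A) ∩ φ(B) = ∅`, and
`φ(A) ∪ φ(B) ⊆ φ(h(A)) ∩ φ(h(B))`. -/
def SepCwSemiTurbulent {Z : Type*} [TopologicalSpace Z] (h : Z → Z) : Prop :=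
  ∃ (Y : Type) (_ : MetricSpace Y) (_ : CompactSpace Y) (_ : ConnectedSpace Y)
    (_ : Nonempty Y) (A B : Set Z) (φ : Z → Y) (f : Y → Y),
    IsCompact A ∧ IsCompact B ∧ IsConnected A ∧ IsConnected B ∧ Disjoint A B ∧
    Continuous φ ∧ Continuous f ∧ f ∘ φ = φ ∘ h ∧
    Disjoint (φ '' A) (φ '' B) ∧
    φ '' A ∪ φ '' B ⊆ φ '' (h '' A) ∩ φ '' (h '' B)

open Filter Topology Function

theorem IsPreconnected.subsingleton_of_subset_cantorSet {S : Set ℝ} (hS : IsPreconnected S)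
    (hSC : S ⊆ cantorSet) : S.Subsingleton :=
  have : TotallyDisconnectedSpace cantorSet :=
    cantorSetHomeomorphNatToBool.isEmbedding.isTotallyDisconnected_range.1
      (isTotallyDisconnected_of_totallyDisconnectedSpace _)
  totallyDisconnectedSpace_subtype_iff.1 this S hSC hS

instance : Uncountable (ℕ → Bool) :=
  Cardinal.aleph0_lt_mk_iff.1 (by simpa using Cardinal.cantor Cardinal.aleph0)

theorem exists_tendsto_of_tendsto_fst_snd {ι α β : Type*} [TopologicalSpace α]
    [TopologicalSpace β] {X : Set (α × β)} (hX : IsClosed X) {l : Filter ι} [l.NeBot]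
    {u : ι → X} {a : α} {b : β} (ha : Tendsto (fun i => (u i : α × β).1) l (𝓝 a))
    (hb : Tendsto (fun i => (u i : α × β).2) l (𝓝 b)) : ∃ p : X, Tendsto u l (𝓝 p) :=
  have hab := ha.prodMk_nhds hb
  ⟨⟨(a, b), hX.mem_of_tendsto hab (Eventually.of_forall fun i => (u i).2)⟩,
    tendsto_subtype_rng.2 hab⟩

theorem exists_strictMono_tendsto_of_mem_Icc {ι : Type*} [Countable ι] {a b : ℝ}
    {u : ℕ → ι → ℝ} (hu : ∀ n i, u n i ∈ Icc a b) :
    ∃ ψ : ℕ → ℕ, StrictMono ψ ∧ ∃ F : ι → ℝ,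
      (∀ i, F i ∈ Icc a b) ∧ ∀ i, Tendsto (fun j => u (ψ j) i) atTop (𝓝 (F i)) := by
  obtain ⟨F, hF, ψ, hψ, hlim⟩ := (isCompact_univ_pi fun _ : ι => isCompact_Icc).isSeqCompact
    (x := u) fun n i _ => hu n i
  exact ⟨ψ, hψ, F, fun i => hF i (mem_univ i), tendsto_pi_nhds.1 hlim⟩

/-- A weak form of Helly's selection theorem. -/
theorem exists_strictMono_tendsto_of_monotone {a b : ℝ} {H : ℕ → ℝ → ℝ}
    (hmono : ∀ n, Monotone (H n)) (hH : ∀ n t, H n t ∈ Icc a b) :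
    ∃ ψ : ℕ → ℕ, StrictMono ψ ∧ ∃ D : Set ℝ, D.Countable ∧
      ∀ t ∉ D, ∃ l, Tendsto (fun j => H (ψ j) t) atTop (𝓝 l) := by
  obtain ⟨ψ, hψ, F, hFab, hF⟩ := exists_strictMono_tendsto_of_mem_Icc fun n (q : ℚ) => hH n q
  have hFmono : Monotone F := fun q q' hqq' =>
    le_of_tendsto_of_tendsto' (hF q) (hF q') fun j => hmono _ (Rat.cast_le.2 hqq')
  -- the sequence converges at every continuity point of this monotone extension of `F` to `ℝ`
  let Φ : ℝ → ℝ := fun t => sSup (F '' {q : ℚ | (q : ℝ) ≤ t})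
  have hbdd : ∀ t, BddAbove (F '' {q : ℚ | (q : ℝ) ≤ t}) := fun t =>
    ⟨b, by rintro _ ⟨q, -, rfl⟩; exact (hFab q).2⟩
  have hne : ∀ t, (F '' {q : ℚ | (q : ℝ) ≤ t}).Nonempty := fun t =>
    let ⟨q, hq⟩ := exists_rat_lt t; ⟨F q, q, hq.le, rfl⟩
  have hF_le : ∀ {q : ℚ} {t : ℝ}, (q : ℝ) ≤ t → F q ≤ Φ t := fun h =>
    le_csSup (hbdd _) ⟨_, h, rfl⟩
  have hle_F : ∀ {q : ℚ} {t : ℝ}, t ≤ q → Φ t ≤ F q := fun h =>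
    csSup_le (hne _) (by rintro _ ⟨q', hq', rfl⟩; exact hFmono (by exact_mod_cast hq'.trans h))
  have hΦmono : Monotone Φ := fun t t' h =>
    csSup_le_csSup (hbdd t') (hne t) (image_mono fun q hq => le_trans hq h)
  refine ⟨ψ, hψ, {t | ¬ContinuousAt Φ t}, hΦmono.countable_not_continuousAt,
    fun t ht => ⟨Φ t, ?_⟩⟩
  have hcont : ContinuousAt Φ t := not_not.1 ht
  refine tendsto_order.2 ⟨fun c hc => ?_, fun c hc => ?_⟩
  · obtain ⟨s, hst, hcs⟩ := (hcont.eventually (lt_mem_nhds hc)).exists_lt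
    obtain ⟨q, hsq, hqt⟩ := exists_rat_btwn hst
    filter_upwards [(hF q).eventually (lt_mem_nhds (hcs.trans_le (hle_F hsq.le)))] with j hj
    exact hj.trans_le (hmono _ hqt.le)
  · obtain ⟨s, hts, hsc⟩ := (hcont.eventually (gt_mem_nhds hc)).exists_gt
    obtain ⟨q, htq, hqs⟩ := exists_rat_btwn hts
    filter_upwards [(hF q).eventually (gt_mem_nhds ((hF_le hqs.le).trans_lt hsc))] with j hj
    exact (hmono _ htq.le).trans_lt hj

theorem exists_forall_iterate_mem_of_subset_image {Y ι : Type*} [TopologicalSpace Y] [T2Space Y]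
    {f : Y → Y} (hf : Continuous f) {K : ι → Set Y} (hKc : ∀ i, IsCompact (K i))
    (hKne : ∀ i, (K i).Nonempty) (hK : ∀ i j, K j ⊆ f '' K i) (s : ℕ → ι) :
    ∃ y, ∀ n, f^[n] y ∈ K (s n) := by
  have hfinite : ∀ n (s : ℕ → ι), ∃ y, ∀ m ≤ n, f^[m] y ∈ K (s m) := by
    intro n
    induction n with
    | zero => exact fun s => (hKne (s 0)).imp fun y hy m hm => by rwa [Nat.le_zero.1 hm]
    | succ n ih =>
      intro s
      obtain ⟨y', hy'⟩ := ih (s ∘ Nat.succ)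
      obtain ⟨y, hy, rfl⟩ := hK (s 0) (s 1) (hy' 0 n.zero_le)
      refine ⟨y, fun m hm => ?_⟩
      cases m with
      | zero => exact hy
      | succ m => exact hy' m (by omega)
  let D : ℕ → Set Y := fun n => ⋂ m ≤ n, f^[m] ⁻¹' K (s m)
  have hDcl : ∀ n, IsClosed (D n) := fun n =>
    isClosed_biInter fun m _ => (hKc (s m)).isClosed.preimage (hf.iterate m)
  obtain ⟨y, hy⟩ := IsCompact.nonempty_iInter_of_sequence_nonempty_isCompact_isClosed D
    (fun n => biInter_mono (fun m hm => Nat.le_succ_of_le hm) fun _ _ => subset_rfl)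
    (fun n => by simpa [D, Set.Nonempty] using hfinite n s) (by simpa [D] using hKc (s 0)) hDcl
  exact ⟨y, fun n => mem_iInter₂.1 (mem_iInter.1 hy n) n le_rfl⟩

theorem exists_mem_image_forall_iterate_mem_cond {Z Y : Type*} [TopologicalSpace Y] [T2Space Y]
    {h : Z → Z} {φ : Z → Y} {f : Y → Y} (hf : Continuous f) (hcomm : f ∘ φ = φ ∘ h)
    {A B : Set Z} (hA : IsCompact (φ '' A)) (hB : IsCompact (φ '' B)) (hAne : A.Nonempty)
    (hBne : B.Nonempty) (hcover : φ '' A ∪ φ '' B ⊆ φ '' (h '' A) ∩ φ '' (h '' B))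
    (s : ℕ → Bool) : ∃ y ∈ φ '' (h '' A), ∀ n, f^[n] y ∈ bif s n then φ '' B else φ '' A := by
  let K : Bool → Set Y := fun i => bif i then φ '' B else φ '' A
  have hKsub : ∀ i, K i ⊆ φ '' (h '' A) ∩ φ '' (h '' B) := by
    rintro (_ | _) <;> [exact subset_union_left.trans hcover; exact subset_union_right.trans hcover]
  have hfK : ∀ S, f '' (φ '' S) = φ '' (h '' S) := fun S => by
    rw [← image_comp, hcomm, image_comp]
  obtain ⟨y, hy⟩ := exists_forall_iterate_mem_of_subset_image hf (K := K)
    (by rintro (_ | _) <;> assumption)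
    (by rintro (_ | _) <;> [exact hAne.image φ; exact hBne.image φ])
    (by
      rintro (_ | _) j <;> simp only [K, cond, hfK] <;>
        [exact (hKsub j).trans inter_subset_left; exact (hKsub j).trans inter_subset_right]) s
  exact ⟨y, (hKsub _ (hy 0)).1, hy⟩

theorem not_disjoint_of_forall_itinerary {Y T : Type*} [TopologicalSpace Y] {f : Y → Y}
    {e : T → Y} {P Q : Set Y} (hP : IsClosed P) (hQ : IsClosed Q)
    (hit : ∀ s : ℕ → Bool, ∃ t, ∀ n, f^[n] (e t) ∈ bif s n then Q else P)
    {ψ : ℕ → ℕ} (hψ : Injective ψ) {D : Set T} (hD : D.Countable)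
    (hconv : ∀ t ∉ D, ∃ w, Tendsto (fun j => f^[ψ j] (e t)) atTop (𝓝 w)) :
    ¬ Disjoint P Q := by
  intro hdisj
  let K : Bool → Set Y := fun i => bif i then Q else P
  have hKdisj : ∀ {i i'}, i ≠ i' → Disjoint (K i) (K i') := by
    rintro (_ | _) (_ | _) h <;> simp_all [K, hdisj.symm]
  -- along `ψ`, the itinerary coded by `σ` reads `false, true, σ 0, false, true, σ 1, …`
  let code : (ℕ → Bool) → ℕ → Bool := fun σ j =>
    if j % 3 = 0 then false else if j % 3 = 1 then true else σ (j / 3)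
  choose θ hθ using fun σ => hit (extend ψ (code σ) fun _ => false)
  have hθψ : ∀ σ j, f^[ψ j] (e (θ σ)) ∈ K (code σ j) := fun σ j => by
    simpa only [hψ.extend_apply] using hθ σ (ψ j)
  have hθinj : Injective θ := by
    intro σ σ' h
    funext j
    by_contra hne
    have hcode : ∀ σ, code σ (3 * j + 2) = σ j := fun σ => by
      simp only [code]; rw [if_neg (by omega), if_neg (by omega)]; congr; omega
    have h1 := hθψ σ (3 * j + 2)
    have h2 := hθψ σ' (3 * j + 2)
    rw [hcode, h] at h1
    rw [hcode] at h2
    exact disjoint_left.1 (hKdisj hne) h1 h2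
  obtain ⟨σ, hσ⟩ : ∃ σ, θ σ ∉ D := by
    by_contra! hθD
    exact not_countable_univ ((mapsTo_univ_iff.2 hθD).countable_of_injOn hθinj.injOn hD)
  obtain ⟨w, hw⟩ := hconv (θ σ) hσ
  have hw_mem : ∀ r i, (∀ j, code σ (3 * j + r) = i) → w ∈ K i := fun r i hri =>
    (show IsClosed (K i) by cases i <;> assumption).mem_of_tendsto
      (hw.comp (tendsto_atTop_atTop.2 fun b => ⟨b, fun j hj => by omega⟩))
      (Eventually.of_forall fun j => hri j ▸ hθψ σ (3 * j + r))
  exact disjoint_left.1 hdisj (hw_mem 0 false fun j => by simp [code])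
    (hw_mem 1 true fun j => by simp [code, Nat.add_mod])

section VerticalSegment

variable {X : Set (ℝ × ℝ)} {c β : ℝ} (hβ : 0 ≤ β) (hseg : ∀ t ∈ Icc 0 β, (c, t) ∈ X)

noncomputable def verticalSegment (t : ℝ) : X :=
  ⟨(c, projIcc 0 β hβ t), hseg _ (projIcc 0 β hβ t).2⟩

theorem continuous_verticalSegment : Continuous (verticalSegment hβ hseg) :=
  (continuous_const.prodMk (continuous_subtype_val.comp continuous_projIcc)).subtype_mk _

theorem fst_verticalSegment (t : ℝ) : (verticalSegment hβ hseg t : ℝ × ℝ).1 = c := rfl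

theorem coe_verticalSegment_of_mem {t : ℝ} (ht : t ∈ Icc 0 β) :
    (verticalSegment hβ hseg t : ℝ × ℝ) = (c, t) := by
  simp [verticalSegment, projIcc_of_mem hβ ht]

end VerticalSegment

theorem exists_verticalSegment_of_isConnected {C : Set ℝ} (hC : C ⊆ cantorSet)
    {X : Set (ℝ × ℝ)} (hXsub : X ⊆ C ×ˢ Icc (0:ℝ) 1)
    (hblade : ∀ c ∈ C, ∃ ρ ∈ Icc (0:ℝ) 1, {t : ℝ | (c, t) ∈ X} = Icc 0 ρ)
    {S : Set X} (hSc : IsCompact S) (hS : IsConnected S) :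
    ∃ c β, ∃ hβ : 0 ≤ β, ∃ hseg : ∀ t ∈ Icc 0 β, (c, t) ∈ X,
      ∀ p ∈ S, ∃ t, verticalSegment hβ hseg t = p := by
  obtain ⟨⟨⟨c, β⟩, hcβ⟩, hp₁, hmax⟩ := hSc.exists_isMaxOn hS.nonempty
    (continuous_snd.comp continuous_subtype_val).continuousOn
  have hfst : ∀ p ∈ S, (p : ℝ × ℝ).1 = c := fun p hp =>
    (hS.isPreconnected.image _ (continuous_fst.comp continuous_subtype_val).continuousOn
      |>.subsingleton_of_subset_cantorSet (by rintro _ ⟨q, -, rfl⟩; exact hC (hXsub q.2).1))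
      (mem_image_of_mem _ hp) (mem_image_of_mem _ hp₁)
  obtain ⟨ρ, -, hρ⟩ := hblade c (hXsub hcβ).1
  have hβρ : β ∈ Icc 0 ρ := hρ ▸ hcβ
  have hseg : ∀ t ∈ Icc 0 β, (c, t) ∈ X := fun t ht =>
    (hρ ▸ ⟨ht.1, ht.2.trans hβρ.2⟩ : t ∈ {t : ℝ | (c, t) ∈ X})
  refine ⟨c, β, hβρ.1, hseg, fun p hp => ⟨(p : ℝ × ℝ).2, Subtype.ext ?_⟩⟩
  rw [coe_verticalSegment_of_mem _ _ ⟨(hXsub p.2).2.1, hmax hp⟩, ← hfst p hp]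

section FiberInjection

variable {X : Set (ℝ × ℝ)} {g : X → X} {μ : ℝ → ℝ}

theorem fst_iterate (hfst : ∀ p : X, (g p : ℝ × ℝ).1 = μ (p : ℝ × ℝ).1) (n : ℕ) (p : X) :
    (g^[n] p : ℝ × ℝ).1 = μ^[n] (p : ℝ × ℝ).1 :=
  Semiconj.iterate_right (f := fun p : X => (p : ℝ × ℝ).1) hfst n p

theorem eq_of_fst_eq_of_iterate_eq (hfst : ∀ p : X, (g p : ℝ × ℝ).1 = μ (p : ℝ × ℝ).1)
    (hinj : ∀ p q : X, (p : ℝ × ℝ).1 = (q : ℝ × ℝ).1 → g p = g q → p = q)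
    (n : ℕ) {p q : X} (hpq : (p : ℝ × ℝ).1 = (q : ℝ × ℝ).1) (h : g^[n] p = g^[n] q) :
    p = q := by
  induction n generalizing p q with
  | zero => exact h
  | succ n ih =>
    refine hinj p q hpq (ih ?_ h)
    rw [hfst, hfst, hpq]

theorem monotone_snd_iterate_verticalSegment (hg : Continuous g)
    (hfst : ∀ p : X, (g p : ℝ × ℝ).1 = μ (p : ℝ × ℝ).1)
    (hinj : ∀ p q : X, (p : ℝ × ℝ).1 = (q : ℝ × ℝ).1 → g p = g q → p = q)
    (hzero : ∀ p : X, (p : ℝ × ℝ).2 = 0 → (g p : ℝ × ℝ).2 = 0) (hX0 : ∀ p ∈ X, 0 ≤ p.2)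
    {c β : ℝ} (hβ : 0 ≤ β) (hseg : ∀ t ∈ Icc 0 β, (c, t) ∈ X) (n : ℕ) :
    Monotone fun t => (g^[n] (verticalSegment hβ hseg t) : ℝ × ℝ).2 := by
  set H := fun t => (g^[n] (verticalSegment hβ hseg t) : ℝ × ℝ).2
  have hcont : Continuous H := continuous_snd.comp
    (continuous_subtype_val.comp ((hg.iterate n).comp (continuous_verticalSegment hβ hseg)))
  have hH0 : H 0 = 0 := MapsTo.iterate (s := {p : X | (p : ℝ × ℝ).2 = 0}) hzero n
    (by simp [coe_verticalSegment_of_mem hβ hseg ⟨le_rfl, hβ⟩])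
  have hinjOn : InjOn H (Icc 0 β) := by
    intro s hs s' hs' h
    have hss' := eq_of_fst_eq_of_iterate_eq hfst hinj n (p := verticalSegment hβ hseg s)
      (q := verticalSegment hβ hseg s') rfl
      (Subtype.ext (Prod.ext (by rw [fst_iterate hfst, fst_iterate hfst, fst_verticalSegment, fst_verticalSegment]) h))
    simpa [coe_verticalSegment_of_mem hβ hseg hs, coe_verticalSegment_of_mem hβ hseg hs'] using
      congrArg (fun p : X => (p : ℝ × ℝ).2) hss'
  have hstrict := hcont.continuousOn.strictMonoOn_of_injOn_Icc hβ
    (by rw [hH0]; exact hX0 _ (g^[n] _).2) hinjOn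
  have hproj : ∀ t, H t = H (projIcc 0 β hβ t) := fun t => by
    simp only [H, verticalSegment, projIcc_val]
  intro t t' htt'
  rw [hproj t, hproj t']
  exact hstrict.monotoneOn (projIcc 0 β hβ t).2 (projIcc 0 β hβ t').2 (monotone_projIcc hβ htt')

theorem exists_tendsto_iterate_verticalSegment (hX : IsClosed X)
    (hfst : ∀ p : X, (g p : ℝ × ℝ).1 = μ (p : ℝ × ℝ).1) {c β : ℝ} (hβ : 0 ≤ β)
    (hseg : ∀ t ∈ Icc 0 β, (c, t) ∈ X) {ψ : ℕ → ℕ} {a : ℝ}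
    (ha : Tendsto (fun j => μ^[ψ j] c) atTop (𝓝 a)) {t l : ℝ}
    (hl : Tendsto (fun j => (g^[ψ j] (verticalSegment hβ hseg t) : ℝ × ℝ).2) atTop (𝓝 l)) :
    ∃ p : X, Tendsto (fun j => g^[ψ j] (verticalSegment hβ hseg t)) atTop (𝓝 p) :=
  exists_tendsto_of_tendsto_fst_snd hX (by simpa only [fst_iterate hfst, fst_verticalSegment] using ha) hl

end FiberInjection

theorem stmt19_general (C : Set ℝ) (hC : C ⊆ cantorSet)
    (X : Set (ℝ × ℝ)) (hXsub : X ⊆ C ×ˢ Icc (0:ℝ) 1) (hXcomp : IsCompact X)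
    (hblade : ∀ c ∈ C, ∃ ρ ∈ Icc (0:ℝ) 1, {t : ℝ | (c, t) ∈ X} = Icc 0 ρ)
    (g : X → X) (hg : Continuous g)
    (μ : ℝ → ℝ)
    (hfst : ∀ p : X, (g p : ℝ × ℝ).1 = μ (p : ℝ × ℝ).1)
    (hinj : ∀ p q : X, (p : ℝ × ℝ).1 = (q : ℝ × ℝ).1 → g p = g q → p = q)
    (hzero : ∀ (c : ℝ) (h : ((c, (0:ℝ)) : ℝ × ℝ) ∈ X), (g ⟨(c, 0), h⟩ : ℝ × ℝ).2 = 0) :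
    ¬ SepCwSemiTurbulent g := by
  rintro ⟨Y, _, _, _, _, A, B, φ, f, hAc, hBc, hAconn, hBconn, -, hφ, hf, hcomm, hdisj, hcover⟩
  obtain ⟨c, β, hβ, hseg, hgA⟩ := exists_verticalSegment_of_isConnected hC hXsub hblade
    (hAc.image hg) (hAconn.image _ hg.continuousOn)
  set e := verticalSegment hβ hseg
  have hit : ∀ s : ℕ → Bool, ∃ t, ∀ n, f^[n] (φ (e t)) ∈ bif s n then φ '' B else φ '' A := by
    intro s
    obtain ⟨_, ⟨_, hp, rfl⟩, hy⟩ := exists_mem_image_forall_iterate_mem_cond hf hcomm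
      (hAc.image hφ) (hBc.image hφ) hAconn.nonempty hBconn.nonempty hcover s
    obtain ⟨t, rfl⟩ := hgA _ hp
    exact ⟨t, hy⟩
  obtain ⟨a, -, ψ₁, hψ₁, ha⟩ := (hXcomp.image continuous_fst).isSeqCompact
    (x := fun n => μ^[n] c) fun n => ⟨_, (g^[n] (e 0)).2, fst_iterate hfst n _⟩
  obtain ⟨ψ₂, hψ₂, D, hD, hlim⟩ := exists_strictMono_tendsto_of_monotone
    (fun n => monotone_snd_iterate_verticalSegment hg hfst hinj
      (by rintro ⟨⟨c, t⟩, hp⟩ (rfl : t = 0); exact hzero c hp) (fun p hp => (hXsub hp).2.1)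
      hβ hseg (ψ₁ n))
    (fun n t => (hXsub (g^[ψ₁ n] (e t)).2).2)
  refine not_disjoint_of_forall_itinerary (e := fun t => φ (e t)) (hAc.image hφ).isClosed
    (hBc.image hφ).isClosed hit (hψ₁.comp hψ₂).injective hD (fun t ht => ?_) hdisj
  obtain ⟨l, hl⟩ := hlim t ht
  obtain ⟨p, hp⟩ := exists_tendsto_iterate_verticalSegment hXcomp.isClosed hfst hβ hseg
    (ha.comp hψ₂.tendsto_atTop) hl
  have hsemi : Semiconj φ g f := fun q => (congrFun hcomm q).symm
  exact ⟨φ p, by simpa only [comp_def, ← (hsemi.iterate_right _).eq] using (hφ.tendsto p).comp hp⟩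

/-- Let `C` be a nonempty closed subset of the (ternary) Cantor set, let
`X ⊆ C × [0,1]` be a blade space over `C` (a compact set whose fiber over each `c ∈ C` is
`{c} × [0, ρ(c)]`), and let `g : X → X` be a continuous fiber-injection fixing the base:
`g(c,x) = (μ(c), h_c(x))` for a continuous `μ : C → C` and fiberwise injections `h_c` with
`h_c(0) = 0`. Then `g` is not separated, continuum-wise semi-turbulent. -/
theorem stmt19 (C : Set ℝ) (hC : C ⊆ cantorSet) (hCne : C.Nonempty) (hCcl : IsClosed C)
    (X : Set (ℝ × ℝ)) (hXsub : X ⊆ C ×ˢ Icc (0:ℝ) 1) (hXcomp : IsCompact X)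
    (hblade : ∀ c ∈ C, ∃ ρ ∈ Icc (0:ℝ) 1, {t : ℝ | (c, t) ∈ X} = Icc 0 ρ)
    (g : X → X) (hg : Continuous g)
    (μ : ℝ → ℝ) (hμc : ContinuousOn μ C) (hμm : MapsTo μ C C)
    (hfst : ∀ p : X, (g p : ℝ × ℝ).1 = μ (p : ℝ × ℝ).1)
    (hinj : ∀ p q : X, (p : ℝ × ℝ).1 = (q : ℝ × ℝ).1 → g p = g q → p = q)
    (hzero : ∀ (c : ℝ) (h : ((c, (0:ℝ)) : ℝ × ℝ) ∈ X), (g ⟨(c, 0), h⟩ : ℝ × ℝ).2 = 0) :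
    ¬ SepCwSemiTurbulent g :=
  stmt19_general C hC X hXsub hXcomp hblade g hg μ hfst hinj hzero
end
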